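/- arXiv:1310.8442 — 4 statements merged into one kernel-verified Lean document; each statement's English description precedes it below -/
import Mathlib

section
/- For every integer t ≥ 1, the Lagrangian of the complete {1,2,3}-graph on t vertices satisfies λ'(K_t^{{1,2,3}}) = 1 + (t-1)/t + (t-1)(t-2)/t², and this value is attained by the uniform weighting assigning weight 1/t to each of the t vertices. -/
open Finset

/-- λ'(H,x) = Σ_{e∈E} |e|! · ∏_{i∈e} x_i  (equals Σ_{j∈R(H)} j!·Σ_{|e|=j} ∏ x_i). -/
noncomputable def lagPoly {n : ℕ} (E : Finset (Finset (Fin n))) (x : Fin n → ℝ) : ℝ :=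
  ∑ e ∈ E, (Nat.factorial e.card : ℝ) * ∏ i ∈ e, x i

/-- A legal weighting: nonnegative entries summing to 1. -/
def isLegal {n : ℕ} (x : Fin n → ℝ) : Prop :=
  (∑ i, x i) = 1 ∧ ∀ i, 0 ≤ x i

/-- The Lagrangian λ'(H): the maximum of λ'(H,x) over legal weightings. -/
noncomputable def lagrangian {n : ℕ} (E : Finset (Finset (Fin n))) : ℝ :=
  sSup {v : ℝ | ∃ x : Fin n → ℝ, isLegal x ∧ lagPoly E x = v}

/-- Edge set of the complete hypergraph K_t^R on vertex set [t]. -/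
def completeEdges (t : ℕ) (R : Finset ℕ) : Finset (Finset (Fin t)) :=
  Finset.univ.filter (fun e => e.card ∈ R)

/-- S induces a complete R-subgraph: every subset of S with cardinality in R is an edge. -/
def isCompleteSub {n : ℕ} (E : Finset (Finset (Fin n))) (R : Finset ℕ) (S : Finset (Fin n)) : Prop :=
  ∀ e ⊆ S, e.card ∈ R → e ∈ E

/-- The maximum complete R-subgraph of H has order t. -/
def maxCompleteOrder {n : ℕ} (E : Finset (Finset (Fin n))) (R : Finset ℕ) (t : ℕ) : Prop :=
  (∃ S, S.card = t ∧ isCompleteSub E R S) ∧ ∀ S, isCompleteSub E R S → S.card ≤ t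

open MvPolynomial

/-!
By Newton's identities, `λ'(K_t^{1,2,3}, x) = p₁ + (p₁² - p₂) + (p₁³ - 3 p₁ p₂ + 2 p₃)` with
`p_k = ∑ x_i^k`, which for `p₁ = 1` is `3 - ∑ g(x_i)`, `g(u) = 4u² - 2u³`. On `[0, 1]` the function
`g` lies above its tangent line at `1/t` as soon as `t ≥ 2`, so `∑ g(x_i) ≥ t · g(1/t)`, with
equality at the uniform weighting.
-/

section Newton

variable (σ : Type*) [Fintype σ] (R : Type*) [CommRing R]

theorem two_mul_esymm_two : 2 * esymm σ R 2 = psum σ R 1 ^ 2 - psum σ R 2 := by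
  have h := mul_esymm_eq_sum σ R 2
  simp only [sum_filter, Nat.sum_antidiagonal_succ, Nat.antidiagonal_zero, sum_singleton] at h
  norm_num at h
  rw [psum_one]
  linear_combination h

theorem six_mul_esymm_three :
    6 * esymm σ R 3 = psum σ R 1 ^ 3 - 3 * psum σ R 1 * psum σ R 2 + 2 * psum σ R 3 := by
  have h := mul_esymm_eq_sum σ R 3
  simp only [sum_filter, Nat.sum_antidiagonal_succ, Nat.antidiagonal_zero, sum_singleton] at h
  norm_num at h
  have h2 := two_mul_esymm_two σ R
  rw [psum_one] at h2 ⊢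
  linear_combination 2 * h + (∑ i, X i : MvPolynomial σ R) * h2

variable {σ R}

theorem eval_esymm (x : σ → R) (k : ℕ) :
    eval x (esymm σ R k) = ∑ e ∈ powersetCard k univ, ∏ i ∈ e, x i := by
  simp [esymm]

theorem eval_psum (x : σ → R) (k : ℕ) : eval x (psum σ R k) = ∑ i, x i ^ k := by
  simp [psum]

end Newton

theorem lagPoly_completeEdges (t : ℕ) (R : Finset ℕ) (x : Fin t → ℝ) :
    lagPoly (completeEdges t R) x = ∑ k ∈ R, k.factorial * eval x (esymm (Fin t) ℝ k) := by
  rw [lagPoly, ← sum_fiberwise_of_maps_to (s := completeEdges t R) (g := card) (t := R)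
    fun e he => (mem_filter.1 he).2]
  refine sum_congr rfl fun k hk => ?_
  rw [eval_esymm, mul_sum, powersetCard_eq_filter, powerset_univ, completeEdges, filter_filter]
  refine sum_congr (filter_congr fun e _ => ⟨And.right, ?_⟩) fun e he => ?_
  · rintro rfl
    exact ⟨hk, rfl⟩
  · rw [(mem_filter.1 he).2]

theorem lagPoly_completeEdges_one_two_three_of_sum_eq_one {t : ℕ} {x : Fin t → ℝ}
    (hx : ∑ i, x i = 1) :
    lagPoly (completeEdges t {1, 2, 3}) x = 3 - ∑ i, (4 * x i ^ 2 - 2 * x i ^ 3) := by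
  have h1 : eval x (esymm (Fin t) ℝ 1) = 1 := by simp [esymm_one, hx]
  have h2 := congrArg (eval x) (two_mul_esymm_two (Fin t) ℝ)
  have h3 := congrArg (eval x) (six_mul_esymm_three (Fin t) ℝ)
  simp only [map_mul, map_sub, map_add, map_pow, map_ofNat, eval_psum, pow_one, hx] at h2 h3
  rw [lagPoly_completeEdges, sum_insert (by decide), sum_insert (by decide), sum_singleton, h1,
    sum_sub_distrib, ← mul_sum, ← mul_sum]
  norm_num [Nat.factorial]
  linear_combination h2 + h3

theorem lagrangian_eq_lagPoly_of_forall_le {n : ℕ} {E : Finset (Finset (Fin n))}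
    {x : Fin n → ℝ} (hx : isLegal x) (hmax : ∀ y, isLegal y → lagPoly E y ≤ lagPoly E x) :
    lagrangian E = lagPoly E x :=
  IsGreatest.csSup_eq ⟨⟨x, hx, rfl⟩, by rintro _ ⟨y, hy, rfl⟩; exact hmax y hy⟩

theorem isLegal_uniform {n : ℕ} (hn : n ≠ 0) : isLegal (fun _ : Fin n => 1 / (n : ℝ)) := by
  refine ⟨?_, fun _ => by positivity⟩
  simp [hn]

/-- The tangent line of `u ↦ 4u² - 2u³` at `1/T`; the gap is `2 (Tu - 1)² (2T - 2 - Tu) / T³`. -/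
theorem tangent_le_four_mul_sq_sub_two_mul_cube {T u : ℝ} (hT : 2 ≤ T) (hu : u ≤ 1) :
    4 / T ^ 2 - 2 / T ^ 3 + (8 / T - 6 / T ^ 2) * (u - 1 / T) ≤ 4 * u ^ 2 - 2 * u ^ 3 := by
  have hT0 : 0 < T := by linarith
  have hgap : 0 ≤ 2 * (T * u - 1) ^ 2 * (2 * T - 2 - T * u) / T ^ 3 := by
    have h : 0 ≤ 2 * T - 2 - T * u := by nlinarith
    exact div_nonneg (mul_nonneg (by positivity) h) (by positivity)
  calc _ = 4 * u ^ 2 - 2 * u ^ 3 - 2 * (T * u - 1) ^ 2 * (2 * T - 2 - T * u) / T ^ 3 := by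
        field_simp
        ring
    _ ≤ _ := sub_le_self _ hgap

theorem four_div_sub_two_div_sq_le_sum {t : ℕ} (ht : t ≠ 0) {x : Fin t → ℝ} (hx : isLegal x) :
    4 / (t : ℝ) - 2 / (t : ℝ) ^ 2 ≤ ∑ i, (4 * x i ^ 2 - 2 * x i ^ 3) := by
  obtain ⟨hsum, hnonneg⟩ := hx
  obtain rfl | h2 : t = 1 ∨ 2 ≤ t := by omega
  · rw [Fin.sum_univ_one] at hsum ⊢
    rw [hsum]
    norm_num
  have hle (i : Fin t) : x i ≤ 1 := hsum ▸ single_le_sum (fun j _ => hnonneg j) (mem_univ i)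
  have hT : (2 : ℝ) ≤ t := by exact_mod_cast h2
  calc 4 / (t : ℝ) - 2 / (t : ℝ) ^ 2
      = ∑ i : Fin t, (4 / t ^ 2 - 2 / t ^ 3 + (8 / t - 6 / t ^ 2) * (x i - 1 / t)) := by
        simp only [sum_add_distrib, ← mul_sum, sum_sub_distrib, hsum, sum_const, card_univ,
          Fintype.card_fin, nsmul_eq_mul]
        field_simp
        ring
    _ ≤ _ := sum_le_sum fun i _ => tangent_le_four_mul_sq_sub_two_mul_cube hT (hle i)

/-- The Lagrangian of the complete {1,2,3}-graph on t vertices, attained by the uniform weighting. -/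
theorem lagrangian_complete_one_two_three (t : ℕ) (ht : 1 ≤ t) :
    lagrangian (completeEdges t ({1, 2, 3} : Finset ℕ)) =
      1 + ((t : ℝ) - 1) / (t : ℝ) + ((t : ℝ) - 1) * ((t : ℝ) - 2) / (t : ℝ) ^ 2 ∧
    isLegal (fun _ : Fin t => 1 / (t : ℝ)) ∧
    lagPoly (completeEdges t ({1, 2, 3} : Finset ℕ)) (fun _ : Fin t => 1 / (t : ℝ)) =
      1 + ((t : ℝ) - 1) / (t : ℝ) + ((t : ℝ) - 1) * ((t : ℝ) - 2) / (t : ℝ) ^ 2 := by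
  have ht0 : t ≠ 0 := by omega
  have hT : (t : ℝ) ≠ 0 := by exact_mod_cast ht0
  have hlegal := isLegal_uniform ht0
  have hvalue : lagPoly (completeEdges t {1, 2, 3}) (fun _ : Fin t => 1 / (t : ℝ)) =
      3 - (4 / (t : ℝ) - 2 / (t : ℝ) ^ 2) := by
    rw [lagPoly_completeEdges_one_two_three_of_sum_eq_one hlegal.1]
    simp only [sum_sub_distrib, sum_const, card_univ, Fintype.card_fin, nsmul_eq_mul]
    field_simp
  have hmax := lagrangian_eq_lagPoly_of_forall_le hlegal fun x hx => by
    rw [hvalue, lagPoly_completeEdges_one_two_three_of_sum_eq_one hx.1]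
    linarith [four_div_sub_two_div_sq_le_sum ht0 hx]
  have hV : 3 - (4 / (t : ℝ) - 2 / (t : ℝ) ^ 2) =
      1 + ((t : ℝ) - 1) / t + ((t : ℝ) - 1) * ((t : ℝ) - 2) / (t : ℝ) ^ 2 := by
    field_simp
    ring
  rw [hmax, hvalue, hV]
  exact ⟨rfl, hlegal, rfl⟩
end

section
/- (Motzkin–Straus) If G is a 2-uniform graph in which a largest clique has order t (t ≥ 1), then λ(G) = λ(K_t^{{2}}) = λ([t]^{(2)}) = (1/2)(1 - 1/t). -/
open Finset

/-- λ(G,x) = Σ_{e∈E} ∏_{i∈e} x_i for a uniform hypergraph. -/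
noncomputable def lagPolyU {n : ℕ} (E : Finset (Finset (Fin n))) (x : Fin n → ℝ) : ℝ :=
  ∑ e ∈ E, ∏ i ∈ e, x i

/-- The Lagrangian λ(G): the maximum of λ(G,x) over legal weightings. -/
noncomputable def lagrangianU {n : ℕ} (E : Finset (Finset (Fin n))) : ℝ :=
  sSup {v : ℝ | ∃ x : Fin n → ℝ, isLegal x ∧ lagPolyU E x = v}

/-!
Moving the whole weight of one endpoint of a non-edge `{i, j}` onto the other changes `λ(G, x)`
by `x j * (∂ᵢλ - ∂ⱼλ)`, since no edge contains both `i` and `j`; merging in the direction of the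
larger partial derivative does not decrease `λ` and shrinks the support. Hence every value of `λ`
is dominated by its value at a weighting supported on a clique `S`, and there
`2λ ≤ (∑ x)² - ∑ x² ≤ 1 - 1/|S|` by Cauchy–Schwarz. The uniform weighting on a largest clique
attains the bound.
-/

section PairSum

variable {ι R : Type*} [DecidableEq ι] [CommRing R]

theorem two_mul_sum_powersetCard_two_prod (S : Finset ι) (x : ι → R) :
    2 * ∑ e ∈ S.powersetCard 2, ∏ i ∈ e, x i = (∑ i ∈ S, x i) ^ 2 - ∑ i ∈ S, x i ^ 2 := by
  induction S using Finset.induction_on with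
  | empty => rw [powersetCard_eq_empty.mpr (by simp)]; simp
  | @insert a S ha ih =>
    have hdisj : Disjoint (S.powersetCard 2) ((S.powersetCard 1).image (insert a)) :=
      disjoint_left.mpr fun e he hei => by
        obtain ⟨e', he', rfl⟩ := mem_image.mp hei
        exact ha ((mem_powersetCard.mp he).1 (mem_insert_self a e'))
    have hinj : Set.InjOn (insert a) (S.powersetCard 1 : Set (Finset ι)) := by
      intro e he e' he' h
      have hae : a ∉ e := fun h => ha ((mem_powersetCard.mp he).1 h)
      have hae' : a ∉ e' := fun h => ha ((mem_powersetCard.mp he').1 h)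
      rw [← erase_insert hae, ← erase_insert hae', h]
    rw [powersetCard_succ_insert ha, sum_union hdisj, sum_image hinj, sum_insert ha, sum_insert ha,
      powersetCard_one, sum_map]
    have hpair : ∑ b ∈ S, ∏ i ∈ {a, b}, x i = x a * ∑ b ∈ S, x b := by
      rw [mul_sum]
      exact sum_congr rfl fun b hb => prod_pair (ne_of_mem_of_not_mem hb ha).symm
    simp only [Function.Embedding.coeFn_mk, hpair]
    linear_combination ih

end PairSum

section Lagrangian

variable {n : ℕ} {E : Finset (Finset (Fin n))} {x : Fin n → ℝ}

theorem lagPolyU_eq_sum_filter_subset {S : Finset (Fin n)} (hx : ∀ i ∉ S, x i = 0) :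
    lagPolyU E x = ∑ e ∈ E with e ⊆ S, ∏ i ∈ e, x i := by
  refine (sum_filter_of_ne fun e _ he v hv => ?_).symm
  by_contra hvS
  exact he (prod_eq_zero hv (hx v hvS))

theorem lagPolyU_le_of_card_le (h2 : ∀ e ∈ E, e.card = 2) (hx : isLegal x)
    {S : Finset (Fin n)} {t : ℕ} (hS : ∀ i ∉ S, x i = 0) (hSt : #S ≤ t) :
    lagPolyU E x ≤ 1 / 2 * (1 - 1 / (t : ℝ)) := by
  have hsum : ∑ i ∈ S, x i = 1 := by
    rw [← hx.1]
    exact sum_subset (subset_univ S) fun i _ hi => hS i hi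
  have hpairs : lagPolyU E x ≤ ∑ e ∈ S.powersetCard 2, ∏ i ∈ e, x i := by
    rw [lagPolyU_eq_sum_filter_subset hS]
    refine sum_le_sum_of_subset_of_nonneg (fun e he => ?_) fun e _ _ =>
      prod_nonneg fun i _ => hx.2 i
    rw [mem_filter] at he
    exact mem_powersetCard.mpr ⟨he.2, h2 e he.1⟩
  have hsq : 1 / (t : ℝ) ≤ ∑ i ∈ S, x i ^ 2 := by
    have hsq_nonneg : 0 ≤ ∑ i ∈ S, x i ^ 2 := sum_nonneg fun i _ => sq_nonneg (x i)
    refine div_le_of_le_mul₀ (Nat.cast_nonneg t) hsq_nonneg ?_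
    calc (1 : ℝ) = (∑ i ∈ S, x i) ^ 2 := by rw [hsum, one_pow]
      _ ≤ #S * ∑ i ∈ S, x i ^ 2 := sq_sum_le_card_mul_sum_sq
      _ ≤ t * ∑ i ∈ S, x i ^ 2 := by gcongr
      _ = (∑ i ∈ S, x i ^ 2) * t := mul_comm _ _
  have hpair_sum := two_mul_sum_powersetCard_two_prod S x
  rw [hsum] at hpair_sum
  linarith

/-- The partial derivative `∂λ(G, x)/∂xᵢ`. -/
noncomputable def lagPartial (E : Finset (Finset (Fin n))) (i : Fin n) (x : Fin n → ℝ) : ℝ :=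
  ∑ e ∈ E with i ∈ e, ∏ v ∈ e.erase i, x v

theorem lagPolyU_eq_mul_lagPartial_add (E : Finset (Finset (Fin n))) (x : Fin n → ℝ) (i : Fin n) :
    lagPolyU E x = x i * lagPartial E i x + ∑ e ∈ E with i ∉ e, ∏ v ∈ e, x v := by
  rw [lagPolyU, ← sum_filter_add_sum_filter_not E (i ∈ ·), lagPartial, mul_sum]
  congr 1
  exact sum_congr rfl fun e he => (mul_prod_erase e x (mem_filter.mp he).2).symm

theorem lagPartial_update_of_forall_notMem {i j : Fin n} (hE : ∀ e ∈ E, j ∈ e → i ∉ e)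
    (x : Fin n → ℝ) (a : ℝ) : lagPartial E j (Function.update x i a) = lagPartial E j x := by
  refine sum_congr rfl fun e he => prod_congr rfl fun v hv => Function.update_of_ne ?_ a x
  rintro rfl
  exact hE e (mem_filter.mp he).1 (mem_filter.mp he).2 (mem_of_mem_erase hv)

theorem lagPolyU_update (E : Finset (Finset (Fin n))) (x : Fin n → ℝ) (i : Fin n) (a : ℝ) :
    lagPolyU E (Function.update x i a) = lagPolyU E x + (a - x i) * lagPartial E i x := by
  have hpartial : lagPartial E i (Function.update x i a) = lagPartial E i x :=
    sum_congr rfl fun e _ => prod_congr rfl fun v hv =>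
      Function.update_of_ne (ne_of_mem_erase hv) a x
  have hrest : ∑ e ∈ E with i ∉ e, ∏ v ∈ e, Function.update x i a v
      = ∑ e ∈ E with i ∉ e, ∏ v ∈ e, x v :=
    sum_congr rfl fun e he => prod_congr rfl fun v hv =>
      Function.update_of_ne (ne_of_mem_of_not_mem hv (mem_filter.mp he).2) a x
  rw [lagPolyU_eq_mul_lagPartial_add _ _ i, lagPolyU_eq_mul_lagPartial_add E x i, hpartial, hrest,
    Function.update_self]
  ring

theorem exists_isLegal_le_card_pos_lt (hx : isLegal x) {i j : Fin n} (hij : i ≠ j)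
    (hE : ∀ e ∈ E, j ∈ e → i ∉ e) (hi : 0 < x i) (hj : 0 < x j)
    (hpartial : lagPartial E j x ≤ lagPartial E i x) :
    ∃ y, isLegal y ∧ lagPolyU E x ≤ lagPolyU E y ∧ #{k | 0 < y k} < #{k | 0 < x k} := by
  set y := Function.update (Function.update x i (x i + x j)) j 0
  have hy : ∀ k, y k = x k + (if k = i then x j else 0) - (if k = j then x j else 0) := by
    intro k
    by_cases hki : k = i <;> by_cases hkj : k = j <;> simp_all [y]
  have hy_nonneg : ∀ k, 0 ≤ y k := by
    intro k
    rw [hy]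
    split_ifs with hki hkj hkj
    · exact absurd (hki.symm.trans hkj) hij
    · linarith [hx.2 k]
    · rw [hkj]; linarith
    · linarith [hx.2 k]
  refine ⟨y, ⟨?_, hy_nonneg⟩, ?_, ?_⟩
  · simp only [hy, sum_sub_distrib, sum_add_distrib, sum_ite_eq', mem_univ, if_true, hx.1]
    ring
  · rw [lagPolyU_update, lagPolyU_update, lagPartial_update_of_forall_notMem hE,
      Function.update_of_ne hij.symm]
    nlinarith [mul_le_mul_of_nonneg_left hpartial hj.le]
  · have hsub : ({k | 0 < y k} : Finset (Fin n)) ⊆ ({k | 0 < x k} : Finset (Fin n)).erase j := by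
      intro k hk
      simp only [mem_filter, mem_univ, true_and, mem_erase] at hk ⊢
      by_cases hki : k = i <;> by_cases hkj : k = j <;> simp_all [y, Function.update_apply]
    exact (card_le_card hsub).trans_lt (card_erase_lt_of_mem (by simpa using hj))

theorem forall_mem_notMem_of_pair_notMem (h2 : ∀ e ∈ E, e.card = 2) {i j : Fin n}
    (hij : i ≠ j) (hpair : {i, j} ∉ E) : ∀ e ∈ E, i ∈ e → j ∉ e := by
  intro e he hi hj
  have hsub : {i, j} ⊆ e := insert_subset hi (singleton_subset_iff.mpr hj)
  rw [eq_of_subset_of_card_le hsub (by rw [h2 e he, card_pair hij])] at hpair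
  exact hpair he

theorem lagPolyU_le_of_forall_isCompleteSub (h2 : ∀ e ∈ E, e.card = 2) {t : ℕ}
    (hcl : ∀ S, isCompleteSub E {2} S → #S ≤ t) (x : Fin n → ℝ) (hx : isLegal x) :
    lagPolyU E x ≤ 1 / 2 * (1 - 1 / (t : ℝ)) := by
  induction hm : #{k | 0 < x k} using Nat.strong_induction_on generalizing x with
  | _ m ih =>
  have hzero : ∀ k ∉ ({k | 0 < x k} : Finset (Fin n)), x k = 0 := fun k hk =>
    le_antisymm (not_lt.mp (by simpa using hk)) (hx.2 k)
  by_cases hS : isCompleteSub E {2} {k | 0 < x k}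
  · exact lagPolyU_le_of_card_le h2 hx hzero (hcl _ hS)
  obtain ⟨e, heS, he2, heE⟩ : ∃ e ⊆ ({k | 0 < x k} : Finset (Fin n)), #e = 2 ∧ e ∉ E := by
    simpa [isCompleteSub] using hS
  obtain ⟨i, j, hij, rfl⟩ := card_eq_two.mp he2
  have hi : 0 < x i := by simpa using heS (mem_insert_self i {j})
  have hj : 0 < x j := by simpa using heS (mem_insert_of_mem (mem_singleton_self j))
  have hE := forall_mem_notMem_of_pair_notMem h2 hij heE
  obtain ⟨y, hy, hxy, hcard⟩ : ∃ y, isLegal y ∧ lagPolyU E x ≤ lagPolyU E y ∧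
      #{k | 0 < y k} < #{k | 0 < x k} := by
    rcases le_total (lagPartial E j x) (lagPartial E i x) with hij' | hji'
    · exact exists_isLegal_le_card_pos_lt hx hij (fun e he hje hie => hE e he hie hje) hi hj hij'
    · exact exists_isLegal_le_card_pos_lt hx hij.symm hE hj hi hji'
  exact hxy.trans (ih _ (hm ▸ hcard) y hy rfl)

noncomputable def uniformWeight (S : Finset (Fin n)) : Fin n → ℝ :=
  fun i => if i ∈ S then (#S : ℝ)⁻¹ else 0

theorem uniformWeight_of_mem {S : Finset (Fin n)} {i : Fin n} (hi : i ∈ S) :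
    uniformWeight S i = (#S : ℝ)⁻¹ :=
  if_pos hi

theorem uniformWeight_of_notMem {S : Finset (Fin n)} {i : Fin n} (hi : i ∉ S) :
    uniformWeight S i = 0 :=
  if_neg hi

theorem sum_uniformWeight {S : Finset (Fin n)} (hS : S.Nonempty) :
    ∑ i ∈ S, uniformWeight S i = 1 := by
  rw [sum_congr rfl fun i hi => uniformWeight_of_mem hi, sum_const, nsmul_eq_mul]
  exact mul_inv_cancel₀ (Nat.cast_ne_zero.mpr hS.card_pos.ne')

theorem isLegal_uniformWeight {S : Finset (Fin n)} (hS : S.Nonempty) :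
    isLegal (uniformWeight S) := by
  refine ⟨?_, fun i => ?_⟩
  · rw [← sum_uniformWeight hS]
    exact (sum_subset (subset_univ S) fun i _ hi => uniformWeight_of_notMem hi).symm
  · unfold uniformWeight
    positivity

theorem lagPolyU_uniformWeight (h2 : ∀ e ∈ E, e.card = 2) {S : Finset (Fin n)}
    (hS : S.Nonempty) (hcl : isCompleteSub E {2} S) :
    lagPolyU E (uniformWeight S) = 1 / 2 * (1 - 1 / (#S : ℝ)) := by
  have hedges : ({e ∈ E | e ⊆ S} : Finset _) = S.powersetCard 2 := by
    ext e
    simp only [mem_filter, mem_powersetCard]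
    exact ⟨fun ⟨he, hsub⟩ => ⟨hsub, h2 e he⟩,
      fun ⟨hsub, hcard⟩ => ⟨hcl e hsub (mem_singleton.mpr hcard), hsub⟩⟩
  have hsq : ∑ i ∈ S, uniformWeight S i ^ 2 = 1 / #S := by
    rw [sum_congr rfl fun i hi => by rw [uniformWeight_of_mem hi], sum_const, nsmul_eq_mul]
    field_simp
  have hpair_sum := two_mul_sum_powersetCard_two_prod S (uniformWeight S)
  rw [sum_uniformWeight hS, hsq] at hpair_sum
  rw [lagPolyU_eq_sum_filter_subset fun i => uniformWeight_of_notMem, hedges]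
  linarith

theorem lagrangianU_eq_of_maxCompleteOrder (h2 : ∀ e ∈ E, e.card = 2) {t : ℕ} (ht : 1 ≤ t)
    (hmax : maxCompleteOrder E {2} t) : lagrangianU E = 1 / 2 * (1 - 1 / (t : ℝ)) := by
  obtain ⟨⟨S, rfl, hS⟩, hcl⟩ := hmax
  have hne : S.Nonempty := card_pos.mp ht
  refine IsGreatest.csSup_eq ⟨⟨_, isLegal_uniformWeight hne, lagPolyU_uniformWeight h2 hne hS⟩, ?_⟩
  rintro _ ⟨x, hx, rfl⟩
  exact lagPolyU_le_of_forall_isCompleteSub h2 hcl x hx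

end Lagrangian

theorem maxCompleteOrder_completeEdges (t : ℕ) (R : Finset ℕ) :
    maxCompleteOrder (completeEdges t R) R t :=
  ⟨⟨univ, card_fin t, fun e _ he => mem_filter.mpr ⟨mem_univ e, he⟩⟩,
    fun S _ => (card_le_univ S).trans_eq (Fintype.card_fin t)⟩

/-- Motzkin–Straus theorem: the Lagrangian of a graph is determined by its clique number. -/
theorem motzkin_straus (t n : ℕ) (ht : 1 ≤ t)
    (E : Finset (Finset (Fin n))) (h2 : ∀ e ∈ E, e.card = 2)
    (hmax : maxCompleteOrder E ({2} : Finset ℕ) t) :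
    lagrangianU E = lagrangianU (completeEdges t ({2} : Finset ℕ)) ∧
    lagrangianU (completeEdges t ({2} : Finset ℕ)) = (1 / 2) * (1 - 1 / (t : ℝ)) := by
  have hK : lagrangianU (completeEdges t {2}) = 1 / 2 * (1 - 1 / (t : ℝ)) :=
    lagrangianU_eq_of_maxCompleteOrder (fun e he => mem_singleton.mp (mem_filter.mp he).2) ht
      (maxCompleteOrder_completeEdges t {2})
  exact ⟨(lagrangianU_eq_of_maxCompleteOrder h2 ht hmax).trans hK.symm, hK⟩
end

section
/- (Frankl–Rödl) Let G = (V, E) be an r-uniform hypergraph on vertex set [n] and let x = (x_1,…,x_n) be an optimal legal weighting for G with exactly k positive weights x_1 ≥ … ≥ x_k > 0 = x_{k+1} = … = x_n, where k is minimal among all optimal legal weightings. Then for every pair {i,j} ⊆ [k] with i ≠ j: (a) λ(E_i^r, x) = λ(E_j^r, x) = r·λ(G), and (b) there is an edge of E containing both i and j. -/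
open Finset

/-- The (r-1)-neighborhood E_i^r of a vertex i. -/
def nbr {n : ℕ} (E : Finset (Finset (Fin n))) (r : ℕ) (i : Fin n) : Finset (Finset (Fin n)) :=
  Finset.univ.filter (fun A : Finset (Fin n) => A.card = r - 1 ∧ A ∪ {i} ∈ E)

/-!
Moving weight `s` from a vertex `j` to a vertex `i` changes `λ(G, x)` by
`s (∂ᵢλ - ∂ⱼλ) - s² ∂ᵢ∂ⱼλ`, because `λ` is multilinear. At an optimal weighting with `xⱼ > 0`
a small such move cannot increase `λ`, so `∂ᵢλ ≤ ∂ⱼλ`; hence all partial derivatives agree on the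
support, and Euler's identity `∑ xᵢ ∂ᵢλ = r λ` for the degree-`r` form `λ` shows that their common
value is `r λ(G)`, while `∂ᵢλ(G, x) = λ(Eᵢ, x)`. If two support vertices `i, j` lay in no common
edge, then `∂ᵢ∂ⱼλ = 0`, and moving all of `xⱼ` onto `i` would give an optimal weighting with one
positive weight fewer, contradicting the minimality of `k`.
-/

/-- The partial derivative `∂λ(G, x)/∂xᵢ`. -/
noncomputable def lagPolyPartial {n : ℕ} (E : Finset (Finset (Fin n))) (x : Fin n → ℝ) (i : Fin n) :
    ℝ :=
  ∑ e ∈ E with i ∈ e, ∏ v ∈ e.erase i, x v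

/-- The second partial derivative `∂²λ(G, x)/∂xᵢ∂xⱼ` for `i ≠ j`. -/
noncomputable def lagPolyPartial₂ {n : ℕ} (E : Finset (Finset (Fin n))) (x : Fin n → ℝ)
    (i j : Fin n) : ℝ :=
  ∑ e ∈ E with i ∈ e ∧ j ∈ e, ∏ v ∈ (e.erase i).erase j, x v

def transfer {n : ℕ} (x : Fin n → ℝ) (i j : Fin n) (s : ℝ) : Fin n → ℝ :=
  x + Pi.single i s - Pi.single j s

section transfer

variable {n : ℕ} (x : Fin n → ℝ) {i j : Fin n} (s : ℝ)

lemma transfer_apply_left (hij : i ≠ j) : transfer x i j s i = x i + s := by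
  simp [transfer, hij]

lemma transfer_apply_right (hij : i ≠ j) : transfer x i j s j = x j - s := by
  simp [transfer, hij.symm]

lemma transfer_apply_of_ne {v : Fin n} (hi : v ≠ i) (hj : v ≠ j) : transfer x i j s v = x v := by
  simp [transfer, hi, hj]

lemma sum_transfer : ∑ v, transfer x i j s v = ∑ v, x v := by
  simp [transfer, sum_add_distrib, sum_sub_distrib]

lemma prod_transfer_of_notMem {t : Finset (Fin n)} (hi : i ∉ t) (hj : j ∉ t) :
    ∏ v ∈ t, transfer x i j s v = ∏ v ∈ t, x v :=
  prod_congr rfl fun _ hv => transfer_apply_of_ne x s (ne_of_mem_of_not_mem hv hi)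
    (ne_of_mem_of_not_mem hv hj)

lemma prod_transfer (hij : i ≠ j) (e : Finset (Fin n)) :
    ∏ v ∈ e, transfer x i j s v
      = ∏ v ∈ e, x v
        + s * ((if i ∈ e then ∏ v ∈ e.erase i, x v else 0)
          - (if j ∈ e then ∏ v ∈ e.erase j, x v else 0))
        - s ^ 2 * (if i ∈ e ∧ j ∈ e then ∏ v ∈ (e.erase i).erase j, x v else 0) := by
  have hyi := transfer_apply_left x s hij
  have hyj := transfer_apply_right x s hij
  by_cases hi : i ∈ e <;> by_cases hj : j ∈ e
  · have hji : j ∈ e.erase i := mem_erase.mpr ⟨hij.symm, hj⟩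
    have hij' : i ∈ e.erase j := mem_erase.mpr ⟨hij, hi⟩
    have split (f : Fin n → ℝ) : ∏ v ∈ e, f v = f i * (f j * ∏ v ∈ (e.erase i).erase j, f v) := by
      rw [mul_prod_erase _ _ hji, mul_prod_erase _ _ hi]
    have erase_i : ∏ v ∈ e.erase i, x v = x j * ∏ v ∈ (e.erase i).erase j, x v :=
      (mul_prod_erase _ _ hji).symm
    have erase_j : ∏ v ∈ e.erase j, x v = x i * ∏ v ∈ (e.erase i).erase j, x v := by
      rw [← mul_prod_erase _ _ hij', erase_right_comm]
    rw [split, split x, erase_i, erase_j, hyi, hyj,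
      prod_transfer_of_notMem x s (fun h => (mem_erase.mp (mem_of_mem_erase h)).1 rfl)
        (notMem_erase j _)]
    simp only [hi, hj, and_self, if_true]
    ring
  · rw [← mul_prod_erase e _ hi, ← mul_prod_erase e x hi, hyi,
      prod_transfer_of_notMem x s (notMem_erase i e) (fun h => hj (mem_of_mem_erase h))]
    simp only [hi, hj, and_false, if_true, if_false]
    ring
  · rw [← mul_prod_erase e _ hj, ← mul_prod_erase e x hj, hyj,
      prod_transfer_of_notMem x s (fun h => hi (mem_of_mem_erase h)) (notMem_erase j e)]
    simp only [hi, hj, false_and, if_true, if_false]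
    ring
  · rw [prod_transfer_of_notMem x s hi hj]
    simp only [hi, hj, false_and, if_false]
    ring

lemma lagPolyU_transfer (E : Finset (Finset (Fin n))) (hij : i ≠ j) :
    lagPolyU E (transfer x i j s)
      = lagPolyU E x + s * (lagPolyPartial E x i - lagPolyPartial E x j)
        - s ^ 2 * lagPolyPartial₂ E x i j := by
  simp only [lagPolyU, lagPolyPartial, lagPolyPartial₂, prod_transfer x s hij, sum_filter,
    mul_sub, sum_add_distrib, sum_sub_distrib, ← mul_sum]

end transfer

lemma isLegal_transfer {n : ℕ} {x : Fin n → ℝ} {i j : Fin n} {s : ℝ} (hx : isLegal x) (hij : i ≠ j)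
    (hs : 0 ≤ s) (hsj : s ≤ x j) : isLegal (transfer x i j s) := by
  refine ⟨(sum_transfer x s).trans hx.1, fun v => ?_⟩
  rcases eq_or_ne v i with rfl | hvi
  · rw [transfer_apply_left x s hij]; linarith [hx.2 v]
  rcases eq_or_ne v j with rfl | hvj
  · rw [transfer_apply_right x s hij]; linarith
  rw [transfer_apply_of_ne x s hvi hvj]; exact hx.2 v

lemma setOf_pos_transfer {n : ℕ} {x : Fin n → ℝ} {i j : Fin n} (hij : i ≠ j) (hi : 0 < x i)
    (hj : 0 ≤ x j) : {v | 0 < transfer x i j (x j) v} = {v | 0 < x v} \ {j} := by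
  ext v
  simp only [Set.mem_ofPred_eq, Set.mem_sdiff, Set.mem_singleton_iff]
  rcases eq_or_ne v i with rfl | hvi
  · simp only [transfer_apply_left x _ hij, hij, not_false_eq_true, and_true, iff_true, hi]
    linarith
  rcases eq_or_ne v j with rfl | hvj
  · simp [transfer_apply_right x _ hij]
  · simp [transfer_apply_of_ne x _ hvi hvj, hvj]

section lagrangian

variable {n r : ℕ} {E : Finset (Finset (Fin n))}

lemma isLegal.apply_le_one {x : Fin n → ℝ} (hx : isLegal x) (i : Fin n) : x i ≤ 1 :=
  hx.1 ▸ single_le_sum (fun v _ => hx.2 v) (mem_univ i)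

lemma lagPolyU_le_lagrangianU (E : Finset (Finset (Fin n))) {y : Fin n → ℝ} (hy : isLegal y) :
    lagPolyU E y ≤ lagrangianU E := by
  refine le_csSup ⟨E.card, ?_⟩ ⟨y, hy, rfl⟩
  rintro _ ⟨z, hz, rfl⟩
  calc lagPolyU E z ≤ ∑ _e ∈ E, (1 : ℝ) :=
        sum_le_sum fun e _ => prod_le_one (fun v _ => hz.2 v) fun v _ => hz.apply_le_one v
    _ = E.card := by simp

lemma mem_nbr (hE : ∀ e ∈ E, e.card = r) {i : Fin n} {A : Finset (Fin n)} :
    A ∈ nbr E r i ↔ i ∉ A ∧ insert i A ∈ E := by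
  simp only [nbr, mem_filter, mem_univ, true_and, union_singleton]
  constructor
  · rintro ⟨hA, hAE⟩
    have hiA : i ∉ A := fun hiA => by
      have hcard := hE _ hAE
      rw [insert_eq_of_mem hiA] at hcard
      have : 0 < A.card := card_pos.mpr ⟨i, hiA⟩
      omega
    exact ⟨hiA, hAE⟩
  · rintro ⟨hiA, hAE⟩
    have hcard := hE _ hAE
    rw [card_insert_of_notMem hiA] at hcard
    exact ⟨by omega, hAE⟩

lemma lagPolyU_nbr (hE : ∀ e ∈ E, e.card = r) (x : Fin n → ℝ) (i : Fin n) :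
    lagPolyU (nbr E r i) x = lagPolyPartial E x i := by
  refine sum_nbij' (insert i) (·.erase i) (fun A hA => ?_) (fun e he => ?_) (fun A hA => ?_)
    (fun e he => ?_) (fun A hA => ?_)
  · rw [mem_nbr hE] at hA
    exact mem_filter.mpr ⟨hA.2, mem_insert_self i A⟩
  · rw [mem_filter] at he
    exact (mem_nbr hE).mpr ⟨notMem_erase i e, (insert_erase he.2).symm ▸ he.1⟩
  · exact erase_insert ((mem_nbr hE).mp hA).1
  · exact insert_erase (mem_filter.mp he).2
  · rw [erase_insert ((mem_nbr hE).mp hA).1]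

lemma sum_mul_lagPolyPartial (hE : ∀ e ∈ E, e.card = r) (x : Fin n → ℝ) :
    ∑ v, x v * lagPolyPartial E x v = r * lagPolyU E x := by
  have expand (v : Fin n) :
      x v * lagPolyPartial E x v = ∑ e ∈ E, if v ∈ e then ∏ w ∈ e, x w else 0 := by
    rw [lagPolyPartial, mul_sum, sum_filter]
    exact sum_congr rfl fun e _ => by split_ifs with hv <;> simp [mul_prod_erase e x, hv]
  simp only [expand, lagPolyU]
  rw [sum_comm, mul_sum]
  refine sum_congr rfl fun e he => ?_
  rw [sum_ite_mem, univ_inter, sum_const, hE e he, nsmul_eq_mul]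

end lagrangian

section optimal

variable {n r : ℕ} {E : Finset (Finset (Fin n))} {x : Fin n → ℝ} {i j : Fin n}

lemma lagPolyPartial_le_of_optimal (hx : isLegal x) (hopt : lagPolyU E x = lagrangianU E)
    (hij : i ≠ j) (hj : 0 < x j) : lagPolyPartial E x i ≤ lagPolyPartial E x j := by
  by_contra! hlt
  set δ := lagPolyPartial E x i - lagPolyPartial E x j
  set D := lagPolyPartial₂ E x i j
  have hδ : 0 < δ := sub_pos.mpr hlt
  have hD : 0 ≤ D := sum_nonneg fun e _ => prod_nonneg fun v _ => hx.2 v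
  set s := min (x j) (δ / (D + 1))
  have hs : 0 < s := lt_min hj (by positivity)
  have hsD : s * D < δ :=
    calc s * D ≤ δ / (D + 1) * D := mul_le_mul_of_nonneg_right (min_le_right _ _) hD
      _ < δ := by rw [div_mul_eq_mul_div, div_lt_iff₀ (by positivity)]; nlinarith
  have hle := lagPolyU_le_lagrangianU E (isLegal_transfer hx hij hs.le (min_le_left _ _))
  rw [lagPolyU_transfer x s E hij, hopt] at hle
  nlinarith

lemma lagPolyPartial_eq_of_optimal (hE : ∀ e ∈ E, e.card = r) (hx : isLegal x)
    (hopt : lagPolyU E x = lagrangianU E) (hi : 0 < x i) :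
    lagPolyPartial E x i = r * lagrangianU E := by
  have hconst (v : Fin n) : x v * lagPolyPartial E x v = x v * lagPolyPartial E x i := by
    rcases (hx.2 v).eq_or_lt with hv | hv
    · simp [← hv]
    rcases eq_or_ne v i with rfl | hvi
    · rfl
    rw [le_antisymm (lagPolyPartial_le_of_optimal hx hopt hvi hi)
      (lagPolyPartial_le_of_optimal hx hopt hvi.symm hv)]
  rw [← hopt, ← sum_mul_lagPolyPartial hE, sum_congr rfl fun v _ => hconst v, ← sum_mul, hx.1,
    one_mul]

lemma lagPolyU_transfer_eq_of_optimal (hx : isLegal x) (hopt : lagPolyU E x = lagrangianU E)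
    (hij : i ≠ j) (hi : 0 < x i) (hj : 0 < x j) (hno : ∀ e ∈ E, i ∈ e → j ∉ e) :
    lagPolyU E (transfer x i j (x j)) = lagrangianU E := by
  have hpartial : lagPolyPartial E x i = lagPolyPartial E x j :=
    le_antisymm (lagPolyPartial_le_of_optimal hx hopt hij hj)
      (lagPolyPartial_le_of_optimal hx hopt hij.symm hi)
  have hD : lagPolyPartial₂ E x i j = 0 := by
    rw [lagPolyPartial₂, filter_false_of_mem fun e he h => hno e he h.1 h.2, sum_empty]
  rw [lagPolyU_transfer x _ E hij, hpartial, hD, hopt]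
  ring

end optimal

lemma ncard_setOf_val_lt_le (n k : ℕ) : {v : Fin n | (v : ℕ) < k}.ncard ≤ k :=
  (Set.ncard_le_ncard_of_injOn Fin.val (fun _ h => (h : _ ∈ Set.Iio k)) Fin.val_injective.injOn
    (Set.finite_Iio k)).trans (by simp)

theorem frankl_rodl_general (r n k : ℕ) (E : Finset (Finset (Fin n)))
    (hE : ∀ e ∈ E, e.card = r)
    (x : Fin n → ℝ) (hx : isLegal x)
    (hopt : lagPolyU E x = lagrangianU E)
    (hpos : ∀ i : Fin n, (i : ℕ) < k → 0 < x i)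
    (hzero : ∀ i : Fin n, k ≤ (i : ℕ) → x i = 0)
    (hmin : ∀ y : Fin n → ℝ, isLegal y → lagPolyU E y = lagrangianU E →
      k ≤ {i : Fin n | 0 < y i}.ncard) :
    (∀ i : Fin n, (i : ℕ) < k → lagPolyU (nbr E r i) x = (r : ℝ) * lagrangianU E) ∧
    (∀ i j : Fin n, (i : ℕ) < k → (j : ℕ) < k → i ≠ j → ∃ e ∈ E, i ∈ e ∧ j ∈ e) := by
  refine ⟨fun i hi => ?_, fun i j hi hj hij => ?_⟩
  · rw [lagPolyU_nbr hE]
    exact lagPolyPartial_eq_of_optimal hE hx hopt (hpos i hi)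
  by_contra! hno
  have hsupp : {v | 0 < x v} ⊆ {v : Fin n | (v : ℕ) < k} := fun v hv =>
    lt_of_not_ge fun hvk => (hzero v hvk).not_gt hv
  have hk := hmin _ (isLegal_transfer hx hij (hx.2 j) le_rfl)
    (lagPolyU_transfer_eq_of_optimal hx hopt hij (hpos i hi) (hpos j hj) hno)
  rw [setOf_pos_transfer hij (hpos i hi) (hx.2 j)] at hk
  have hlt := Set.ncard_sdiff_singleton_lt_of_mem (s := {v | 0 < x v}) (hpos j hj)
  have hle := (Set.ncard_le_ncard hsupp).trans (ncard_setOf_val_lt_le n k)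
  omega

/-- Frankl–Rödl lemma: at an optimal legal weighting with minimal support of size k,
λ(E_i^r, x) = r·λ(G) for every i in the support, and each pair of support vertices lies
in a common edge. -/
theorem frankl_rodl (r n k : ℕ) (E : Finset (Finset (Fin n)))
    (hE : ∀ e ∈ E, e.card = r)
    (x : Fin n → ℝ) (hx : isLegal x)
    (hopt : lagPolyU E x = lagrangianU E)
    (hmono : ∀ a b : Fin n, a ≤ b → x b ≤ x a)
    (hk : k ≤ n)
    (hpos : ∀ i : Fin n, (i : ℕ) < k → 0 < x i)
    (hzero : ∀ i : Fin n, k ≤ (i : ℕ) → x i = 0)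
    (hmin : ∀ y : Fin n → ℝ, isLegal y → lagPolyU E y = lagrangianU E →
      k ≤ {i : Fin n | 0 < y i}.ncard) :
    (∀ i : Fin n, (i : ℕ) < k → lagPolyU (nbr E r i) x = (r : ℝ) * lagrangianU E) ∧
    (∀ i j : Fin n, (i : ℕ) < k → (j : ℕ) < k → i ≠ j → ∃ e ∈ E, i ∈ e ∧ j ∈ e) :=
  frankl_rodl_general r n k E hE x hx hopt hpos hzero hmin
end

section
/- Let H be a hypergraph on vertex set [n] and let x = (x_1,…,x_n) be an optimal legal weighting for H with x_1 ≥ x_2 ≥ … ≥ x_k > x_{k+1} = … = x_n = 0, where the number k of positive weights is minimal among all optimal legal weightings. Then ∂λ'(H,x)/∂x_1 = ∂λ'(H,x)/∂x_2 = … = ∂λ'(H,x)/∂x_k, and for every pair {i,j} ⊆ [k] with i ≠ j there is an edge of H containing both i and j. -/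
open Finset

/-! Moving weight `t` from vertex `j` to vertex `i` keeps a weighting legal for `0 ≤ t ≤ x j`, so at
a maximum the derivative of `λ'` in the direction `e_i - e_j` is nonpositive whenever `x j > 0`; for
two positive weights this gives equality of the partials. If no edge contains both `i` and `j`,
every monomial of `λ'` involves at most one of `x i`, `x j`, so `λ'` is affine along that line.
An affine function maximal at an interior point `t = 0` of `[-x i, x j]` is constant there, so
moving all of `x j` onto `i` yields an optimal weighting with fewer positive weights. -/

lemma Finset.exists_prod_add_mul_eq {ι : Type*} [DecidableEq ι] (e : Finset ι) (x d : ι → ℝ)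
    (a : ι) (hd : ∀ v ∈ e, v ≠ a → d v = 0) :
    ∃ c, ∀ t, ∏ v ∈ e, (x v + t * d v) = ∏ v ∈ e, x v + t * c := by
  by_cases ha : a ∈ e
  · refine ⟨d a * ∏ v ∈ e.erase a, x v, fun t => ?_⟩
    have hrest : ∏ v ∈ e.erase a, (x v + t * d v) = ∏ v ∈ e.erase a, x v :=
      prod_congr rfl fun v hv => by
        rw [hd v (mem_of_mem_erase hv) (ne_of_mem_erase hv), mul_zero, add_zero]
    rw [← mul_prod_erase e _ ha, ← mul_prod_erase e x ha, hrest]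
    ring
  · refine ⟨0, fun t => ?_⟩
    rw [mul_zero, add_zero]
    exact prod_congr rfl fun v hv => by
      rw [hd v hv (ne_of_mem_of_not_mem hv ha), mul_zero, add_zero]

lemma Fin.ncard_le_of_forall_lt {n k : ℕ} {s : Set (Fin n)} (h : ∀ i ∈ s, (i : ℕ) < k) :
    s.ncard ≤ k :=
  (Set.ncard_le_ncard_of_injOn Fin.val h Fin.val_injective.injOn).trans (Set.ncard_Iio_nat k).le

section ShiftWeight

variable {ι : Type*} [DecidableEq ι]

def shiftWeight (x : ι → ℝ) (i j : ι) (t : ℝ) : ι → ℝ :=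
  x + t • (Pi.single i 1 - Pi.single j 1)

variable {x : ι → ℝ} {i j : ι}

lemma shiftWeight_apply_left (hij : i ≠ j) (t : ℝ) : shiftWeight x i j t i = x i + t := by
  simp [shiftWeight, hij]

lemma shiftWeight_apply_right (hij : i ≠ j) (t : ℝ) : shiftWeight x i j t j = x j - t := by
  simp [shiftWeight, hij.symm, sub_eq_add_neg]

lemma shiftWeight_apply_of_ne {v : ι} (hvi : v ≠ i) (hvj : v ≠ j) (t : ℝ) :
    shiftWeight x i j t v = x v := by
  simp [shiftWeight, hvi, hvj]

lemma shiftWeight_neg (t : ℝ) : shiftWeight x i j (-t) = shiftWeight x j i t := by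
  simp only [shiftWeight, neg_smul, ← smul_neg, neg_sub]

lemma shiftWeight_mem_stdSimplex [Fintype ι] (hx : x ∈ stdSimplex ℝ ι) (hij : i ≠ j) {t : ℝ}
    (ht₀ : 0 ≤ t) (ht : t ≤ x j) : shiftWeight x i j t ∈ stdSimplex ℝ ι := by
  refine ⟨fun v => ?_, ?_⟩
  · rcases eq_or_ne v i with rfl | hvi
    · rw [shiftWeight_apply_left hij]; linarith [hx.1 v]
    rcases eq_or_ne v j with rfl | hvj
    · rw [shiftWeight_apply_right hij]; linarith
    · rw [shiftWeight_apply_of_ne hvi hvj]; exact hx.1 v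
  · simp [shiftWeight, sum_add_distrib, ← mul_sum, hx.2]

lemma setOf_shiftWeight_pos_ssubset (hij : i ≠ j) (hi : 0 < x i) (hj : 0 < x j) :
    {v | 0 < shiftWeight x i j (x j) v} ⊂ {v | 0 < x v} := by
  refine Set.ssubset_iff_subset_ne.2 ⟨fun v hv => ?_, fun h => ?_⟩
  · rcases eq_or_ne v i with rfl | hvi
    · exact hi
    rcases eq_or_ne v j with rfl | hvj
    · simp [shiftWeight_apply_right hij] at hv
    · simpa [shiftWeight_apply_of_ne hvi hvj] using hv
  · have : j ∈ {v | 0 < shiftWeight x i j (x j) v} := h ▸ hj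
    simp [shiftWeight_apply_right hij] at this

end ShiftWeight

lemma fderiv_single_le_of_isMaxOn {ι : Type*} [Fintype ι] [DecidableEq ι] {f : (ι → ℝ) → ℝ}
    {x : ι → ℝ} (hf : DifferentiableAt ℝ f x) (hmax : IsMaxOn f (stdSimplex ℝ ι) x)
    (hx : x ∈ stdSimplex ℝ ι) (i : ι) {j : ι} (hj : 0 < x j) :
    fderiv ℝ f x (Pi.single i 1) ≤ fderiv ℝ f x (Pi.single j 1) := by
  rcases eq_or_ne i j with rfl | hij
  · rfl
  have hy : shiftWeight x i j (x j) ∈ stdSimplex ℝ ι :=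
    shiftWeight_mem_stdSimplex hx hij hj.le le_rfl
  have hcone : x j • (Pi.single i 1 - Pi.single j 1) ∈ posTangentConeAt (stdSimplex ℝ ι) x :=
    mem_posTangentConeAt_of_segment_subset ((convex_stdSimplex ℝ ι).segment_subset hx hy)
  have hderiv := hmax.localize.hasFDerivWithinAt_nonpos hf.hasFDerivAt.hasFDerivWithinAt hcone
  rw [map_smul, map_sub, smul_eq_mul] at hderiv
  nlinarith

lemma IsMaxOn.shiftWeight_eq_of_affine {ι : Type*} [Fintype ι] [DecidableEq ι]
    {f : (ι → ℝ) → ℝ} {x : ι → ℝ} (hmax : IsMaxOn f (stdSimplex ℝ ι) x)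
    (hx : x ∈ stdSimplex ℝ ι) {i j : ι} (hij : i ≠ j) (hi : 0 < x i) (hj : 0 < x j) {C : ℝ}
    (hC : ∀ t, f (shiftWeight x i j t) = f x + t * C) :
    f (shiftWeight x i j (x j)) = f x := by
  have hto_i := hmax (shiftWeight_mem_stdSimplex hx hij hj.le le_rfl)
  have hto_j := hmax (shiftWeight_mem_stdSimplex hx hij.symm hi.le le_rfl)
  rw [Set.mem_ofPred_eq, ← shiftWeight_neg, hC] at hto_j
  rw [Set.mem_ofPred_eq, hC] at hto_i
  rw [hC]
  nlinarith

lemma isLegal_iff_mem_stdSimplex {n : ℕ} {x : Fin n → ℝ} :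
    isLegal x ↔ x ∈ stdSimplex ℝ (Fin n) :=
  and_comm

section Lagrangian

variable {n : ℕ} (E : Finset (Finset (Fin n)))

lemma differentiable_lagPoly : Differentiable ℝ (lagPoly E) := by
  unfold lagPoly
  fun_prop

lemma lagPoly_le_lagrangian {y : Fin n → ℝ} (hy : y ∈ stdSimplex ℝ (Fin n)) :
    lagPoly E y ≤ lagrangian E := by
  refine le_csSup ?_ ⟨y, isLegal_iff_mem_stdSimplex.2 hy, rfl⟩
  have hbdd := (isCompact_stdSimplex ℝ (Fin n)).bddAbove_image
    (differentiable_lagPoly E).continuous.continuousOn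
  simpa [isLegal_iff_mem_stdSimplex, Set.image] using hbdd

lemma isMaxOn_lagPoly_of_eq_lagrangian {x : Fin n → ℝ} (hopt : lagPoly E x = lagrangian E) :
    IsMaxOn (lagPoly E) (stdSimplex ℝ (Fin n)) x :=
  fun _ hy => hopt ▸ lagPoly_le_lagrangian E hy

lemma exists_lagPoly_shiftWeight_eq_add_mul (x : Fin n → ℝ) {i j : Fin n}
    (hE : ∀ e ∈ E, i ∈ e → j ∉ e) :
    ∃ C, ∀ t, lagPoly E (shiftWeight x i j t) = lagPoly E x + t * C := by
  have hedge : ∀ e ∈ E, ∃ c, ∀ t : ℝ,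
      ∏ v ∈ e, (x v + t * (Pi.single i 1 - Pi.single j 1 : Fin n → ℝ) v) = ∏ v ∈ e, x v + t * c := by
    intro e he
    by_cases hi : i ∈ e
    · refine e.exists_prod_add_mul_eq x _ i fun v hv hvi => ?_
      simp [hvi, ne_of_mem_of_not_mem hv (hE e he hi)]
    · refine e.exists_prod_add_mul_eq x _ j fun v hv hvj => ?_
      simp [hvj, ne_of_mem_of_not_mem hv hi]
  choose! c hc using hedge
  refine ⟨∑ e ∈ E, (e.card.factorial : ℝ) * c e, fun t => ?_⟩
  simp only [lagPoly, shiftWeight, Pi.add_apply, Pi.smul_apply, smul_eq_mul, mul_sum,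
    ← sum_add_distrib]
  refine sum_congr rfl fun e he => ?_
  rw [hc e he]
  ring

end Lagrangian

theorem optimal_weighting_partials_general (n k : ℕ) (E : Finset (Finset (Fin n)))
    (x : Fin n → ℝ) (hx : isLegal x)
    (hopt : lagPoly E x = lagrangian E)
    (hpos : ∀ i : Fin n, (i : ℕ) < k → 0 < x i)
    (hzero : ∀ i : Fin n, k ≤ (i : ℕ) → x i = 0)
    (hmin : ∀ y : Fin n → ℝ, isLegal y → lagPoly E y = lagrangian E →
      k ≤ {i : Fin n | 0 < y i}.ncard) :
    (∀ i j : Fin n, (i : ℕ) < k → (j : ℕ) < k →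
      fderiv ℝ (lagPoly E) x (Pi.single i 1) = fderiv ℝ (lagPoly E) x (Pi.single j 1)) ∧
    (∀ i j : Fin n, (i : ℕ) < k → (j : ℕ) < k → i ≠ j → ∃ e ∈ E, i ∈ e ∧ j ∈ e) := by
  rw [isLegal_iff_mem_stdSimplex] at hx
  have hmax := isMaxOn_lagPoly_of_eq_lagrangian E hopt
  have hdiff := differentiable_lagPoly E x
  refine ⟨fun i j hi hj => le_antisymm (fderiv_single_le_of_isMaxOn hdiff hmax hx i (hpos j hj))
    (fderiv_single_le_of_isMaxOn hdiff hmax hx j (hpos i hi)), fun i j hi hj hij => ?_⟩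
  by_contra! hE
  obtain ⟨C, hC⟩ := exists_lagPoly_shiftWeight_eq_add_mul E x hE
  set y := shiftWeight x i j (x j)
  have hy_opt : lagPoly E y = lagrangian E :=
    (hmax.shiftWeight_eq_of_affine hx hij (hpos i hi) (hpos j hj) hC).trans hopt
  have hy_supp : {v | 0 < y v} ⊂ {v | 0 < x v} :=
    setOf_shiftWeight_pos_ssubset hij (hpos i hi) (hpos j hj)
  have hx_supp : {v | 0 < x v}.ncard ≤ k := Fin.ncard_le_of_forall_lt fun v hv => by
    by_contra! hvk
    exact (hzero v hvk).not_gt hv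
  have hy_min := hmin y (isLegal_iff_mem_stdSimplex.2
    (shiftWeight_mem_stdSimplex hx hij (hpos j hj).le le_rfl)) hy_opt
  have hlt := Set.ncard_lt_ncard hy_supp
  omega

/-- Lemma 9 of the paper (Peng et al.): at an optimal legal weighting with a minimal number k of
positive weights, all partial derivatives at the first k coordinates agree, and every pair of the
first k vertices is covered by an edge. -/
theorem optimal_weighting_partials (n k : ℕ) (E : Finset (Finset (Fin n)))
    (x : Fin n → ℝ) (hx : isLegal x)
    (hopt : lagPoly E x = lagrangian E)
    (hmono : ∀ a b : Fin n, a ≤ b → x b ≤ x a)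
    (hk : k ≤ n)
    (hpos : ∀ i : Fin n, (i : ℕ) < k → 0 < x i)
    (hzero : ∀ i : Fin n, k ≤ (i : ℕ) → x i = 0)
    (hmin : ∀ y : Fin n → ℝ, isLegal y → lagPoly E y = lagrangian E →
      k ≤ {i : Fin n | 0 < y i}.ncard) :
    (∀ i j : Fin n, (i : ℕ) < k → (j : ℕ) < k →
      fderiv ℝ (lagPoly E) x (Pi.single i 1) = fderiv ℝ (lagPoly E) x (Pi.single j 1)) ∧
    (∀ i j : Fin n, (i : ℕ) < k → (j : ℕ) < k → i ≠ j → ∃ e ∈ E, i ∈ e ∧ j ∈ e) :=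
  optimal_weighting_partials_general n k E x hx hopt hpos hzero hmin
end
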